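/- arXiv:2511.20171 — 3 statements merged into one kernel-verified Lean document; each statement's English description precedes it below -/
import Mathlib

section
/- If G is a finite nonabelian simple group and M is a proper subgroup of G of maximal order among proper subgroups, then the permutation character (1_M)^G has a nonprincipal irreducible constituent, and no nonprincipal irreducible constituent of (1_M)^G is monomial. -/
open scoped BigOperators Classical

/-- The character of a finite group induced from a function on a subgroup,
given by the usual induction formula. -/
noncomputable def indChar {G : Type} [Group G] (H : Subgroup G) (φ : H → ℂ) : G → ℂ :=
  fun g => (Nat.card H : ℂ)⁻¹ *
    ∑ᶠ x : G, if h : x * g * x⁻¹ ∈ H then φ (⟨x * g * x⁻¹, h⟩ : H) else 0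

/-- The permutation character `(1_M)^G`. -/
noncomputable def permChar {G : Type} [Group G] (M : Subgroup G) : G → ℂ :=
  indChar M (fun _ => 1)

/-- The usual inner product of class functions on a finite group. -/
noncomputable def charInner (G : Type) [Group G] (φ ψ : G → ℂ) : ℂ :=
  (Nat.card G : ℂ)⁻¹ * ∑ᶠ g : G, φ g * (starRingEnd ℂ) (ψ g)

/-- `χ` is an irreducible complex character of `G`. -/
def IsIrrChar (G : Type) [Group G] (χ : G → ℂ) : Prop :=
  ∃ V : FDRep ℂ G, CategoryTheory.Simple V ∧ FDRep.character V = χ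

/-- `χ` is an irreducible constituent of the (virtual) character `ψ`. -/
def IsConstituent (G : Type) [Group G] (χ ψ : G → ℂ) : Prop :=
  IsIrrChar G χ ∧ charInner G χ ψ ≠ 0

/-- A linear character of a subgroup: a multiplicative function to `ℂ` taking value `1` at `1`. -/
def IsLinearChar {G : Type} [Group G] (H : Subgroup G) (φ : H → ℂ) : Prop :=
  φ 1 = 1 ∧ ∀ a b : H, φ (a * b) = φ a * φ b

/-- A character is monomial if it is induced from a linear character of a subgroup. -/
def IsMonomial (G : Type) [Group G] (χ : G → ℂ) : Prop :=
  ∃ (H : Subgroup G) (φ : H → ℂ), IsLinearChar H φ ∧ χ = indChar H φ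

/-- The kernel of a character, as a set. -/
def charKer (G : Type) [Group G] (χ : G → ℂ) : Set G := {g | χ g = χ 1}

/-- `n` is a `π`-number: all its prime divisors lie in `π`. -/
def IsPiNumber (π : Set ℕ) (n : ℕ) : Prop := ∀ p : ℕ, p.Prime → p ∣ n → p ∈ π

/-- The largest normal `π'`-subgroup `O_{π'}(G)` (as the join of all normal `π'`-subgroups). -/
def Opi' (π : Set ℕ) (G : Type) [Group G] : Subgroup G :=
  ⨆ N ∈ {N : Subgroup G | N.Normal ∧ IsPiNumber πᶜ (Nat.card N)}, N

/-- `G` is `π`-separable: it has a normal series whose factors are `π`-groups or `π'`-groups. -/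
def IsPiSeparable (π : Set ℕ) (G : Type) [Group G] : Prop :=
  ∃ (n : ℕ) (H : Fin (n + 1) → Subgroup G),
    H 0 = ⊥ ∧ H (Fin.last n) = ⊤ ∧
    ∀ i : Fin n, H i.castSucc ≤ H i.succ ∧
      ((H i.castSucc).subgroupOf (H i.succ)).Normal ∧
      (IsPiNumber π (Nat.card (H i.succ ⧸ (H i.castSucc).subgroupOf (H i.succ))) ∨
       IsPiNumber πᶜ (Nat.card (H i.succ ⧸ (H i.castSucc).subgroupOf (H i.succ))))

/-- `G` is `π`-solvable: it has a normal series whose factors are `π'`-groups or solvable. -/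
def IsPiSolvable (π : Set ℕ) (G : Type) [Group G] : Prop :=
  ∃ (n : ℕ) (H : Fin (n + 1) → Subgroup G),
    H 0 = ⊥ ∧ H (Fin.last n) = ⊤ ∧
    ∀ i : Fin n, H i.castSucc ≤ H i.succ ∧
      ∃ hn : ((H i.castSucc).subgroupOf (H i.succ)).Normal,
      (IsPiNumber πᶜ (Nat.card (H i.succ ⧸ (H i.castSucc).subgroupOf (H i.succ))) ∨
       (letI := hn; IsSolvable (H i.succ ⧸ (H i.castSucc).subgroupOf (H i.succ))))

/-- The inertia subgroup `I_G(λ)` of a character of a normal subgroup. -/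
def inertia {G : Type} [Group G] (N : Subgroup G) (hN : N.Normal) (lam : N → ℂ) :
    Subgroup G where
  carrier := {g | ∀ n : N, lam ⟨g * n * g⁻¹, hN.conj_mem n n.2 g⟩ = lam n}
  one_mem' := by intro n; simp
  mul_mem' := by
    intro a b ha hb n
    have h1 := ha ⟨b * (n : G) * b⁻¹, hN.conj_mem n n.2 b⟩
    have h2 := hb n
    have e : (a * b) * (n : G) * (a * b)⁻¹ = a * (b * (n : G) * b⁻¹) * a⁻¹ := by group
    calc lam ⟨(a * b) * (n : G) * (a * b)⁻¹, hN.conj_mem n n.2 (a * b)⟩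
        = lam ⟨a * (b * (n : G) * b⁻¹) * a⁻¹, by
            rw [← e]; exact hN.conj_mem n n.2 (a * b)⟩ := by
          congr 1; exact Subtype.ext e
      _ = lam n := by rw [h1]; exact h2
  inv_mem' := by
    intro a ha n
    have h1 := ha ⟨a⁻¹ * (n : G) * a, by simpa using hN.conj_mem n n.2 a⁻¹⟩
    have e : a * (a⁻¹ * (n : G) * a) * a⁻¹ = (n : G) := by group
    have : lam ⟨(n : G), by rw [← e]; exact hN.conj_mem _ (by simpa using hN.conj_mem n n.2 a⁻¹) a⟩
        = lam ⟨a⁻¹ * (n : G) * a, by simpa using hN.conj_mem n n.2 a⁻¹⟩ := by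
      rw [← h1]; congr 1; exact Subtype.ext e.symm
    simpa using this.symm

/-- Conjugate of a character of a normal subgroup by a group element. -/
def conjChar {G : Type} [Group G] {N : Subgroup G} (hN : N.Normal) (g : G) (lam : N → ℂ) :
    N → ℂ :=
  fun n => lam ⟨g * (n : G) * g⁻¹, hN.conj_mem n n.2 g⟩

/-!
`(1_M)^G` is the character of the permutation module `ℂ[G/M]`, whose invariants are the
constants (Burnside). A simple submodule of a Maschke complement of the constants gives a
nonprincipal constituent. Conversely, a nonprincipal irreducible constituent `χ` embeds in
`ℂ[G/M]` meeting the constants trivially, so `χ(1) < [G:M]`. If `χ = λ^G` with `λ` linear on `H`,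
then `[G:H] = χ(1) < [G:M]`, so `|H| > |M|` and `H = G` by the maximality of `|M|`; but then
`χ = λ` is a linear character of a nonabelian simple group, hence principal.
-/

open CategoryTheory Limits Module Representation MulAction

namespace FDRep

section Morphisms

variable {k G : Type*} [Field k] [Monoid G] {V W : FDRep k G}

lemma hom_comm_apply (f : V ⟶ W) (g : G) (v : V) : f.hom (V.ρ g v) = W.ρ g (f.hom v) :=
  ConcreteCategory.congr_hom (f.comm g) v

lemma injective_of_mono (f : V ⟶ W) [Mono f] : Function.Injective f.hom :=
  (Rep.mono_iff_injective ((forget₂ (FDRep k G) (Rep k G)).map f)).1 inferInstance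

lemma mono_of_injective (f : V ⟶ W) (hf : Function.Injective f.hom) : Mono f :=
  (forget₂ (FDRep k G) (Rep k G)).mono_of_mono_map ((Rep.mono_iff_injective _).2 hf)

lemma isIso_of_bijective (f : V ⟶ W) (hf : Function.Bijective f.hom) : IsIso f :=
  have : IsIso f.hom := (ConcreteCategory.isIso_iff_bijective _).2 hf
  Action.isIso_of_hom_isIso f

lemma not_isZero_of_nontrivial [Nontrivial V] : ¬ IsZero V := by
  intro h
  obtain ⟨v, hv⟩ := exists_ne (0 : V)
  exact hv (congrArg (fun f : V ⟶ V => f.hom v) (h.eq_of_src (𝟙 V) 0))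

lemma nontrivial_of_ne_zero {f : V ⟶ W} (hf : f ≠ 0) : Nontrivial V := by
  by_contra h
  rw [not_nontrivial_iff_subsingleton] at h
  exact hf (by ext v; simp [Subsingleton.elim v 0])

lemma exists_simple_mono (X : FDRep k G) [Nontrivial X] :
    ∃ (V : FDRep k G) (f : V ⟶ X), Simple V ∧ Mono f := by
  induction hn : finrank k X using Nat.strong_induction_on generalizing X with
  | _ n ih =>
  by_cases hX : Simple X
  · exact ⟨X, 𝟙 X, hX, inferInstance⟩
  obtain ⟨Y, f, hf, hf0, hfiso⟩ : ∃ (Y : FDRep k G) (f : Y ⟶ X), Mono f ∧ f ≠ 0 ∧ ¬ IsIso f := by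
    by_contra! h
    refine hX ⟨fun {Y} f _ =>
      ⟨fun hiso hf0 => not_isZero_of_nontrivial (V := X) ?_, fun hf0 => h Y f ‹_› hf0⟩⟩
    subst hf0
    exact ((isIsoZero_iff_source_target_isZero Y X).1 hiso).2
  have := nontrivial_of_ne_zero hf0
  have hlt : finrank k Y < n := by
    rw [← hn]
    refine (LinearMap.finrank_le_finrank_of_injective (f := f.hom.hom.hom)
      (injective_of_mono f)).lt_of_ne fun heq => hfiso (isIso_of_bijective f ?_)
    exact ⟨injective_of_mono f,
      (LinearMap.injective_iff_surjective_of_finrank_eq_finrank heq).1 (injective_of_mono f)⟩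
  obtain ⟨V, e, hV, he⟩ := ih _ hlt Y rfl
  exact ⟨V, e ≫ f, hV, mono_comp e f⟩

end Morphisms

section Invariants

variable {k G : Type*} [Field k] [Group G] {V W : FDRep k G}

lemma mem_invariants_of_mono (f : V ⟶ W) [Mono f] {v : V} (hv : f.hom v ∈ invariants W.ρ) :
    v ∈ invariants V.ρ :=
  fun g => injective_of_mono f (by rw [hom_comm_apply, hv g])

lemma invariants_eq_bot_of_mono (f : V ⟶ W) [Mono f] (hW : invariants W.ρ = ⊥) :
    invariants V.ρ = ⊥ := by
  refine eq_bot_iff.2 fun v hv => ?_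
  have : f.hom v ∈ invariants W.ρ := fun g => by rw [← hom_comm_apply, hv g]
  rw [hW, Submodule.mem_bot] at this
  exact (Submodule.mem_bot k).2 (injective_of_mono f (this.trans f.hom.hom.hom.map_zero.symm))

lemma finrank_add_finrank_invariants_le (f : V ⟶ W) [Mono f] (hV : invariants V.ρ = ⊥) :
    finrank k V + finrank k (invariants W.ρ) ≤ finrank k W := by
  have hdisj : LinearMap.range f.hom.hom.hom ⊓ invariants W.ρ = ⊥ := by
    refine eq_bot_iff.2 ?_
    rintro _ ⟨⟨v, rfl⟩, hv⟩
    have := mem_invariants_of_mono f hv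
    rw [hV, Submodule.mem_bot] at this
    simp [this]
  have := Submodule.finrank_sup_add_finrank_inf_eq (LinearMap.range f.hom.hom.hom) (invariants W.ρ)
  rw [hdisj, finrank_bot, add_zero,
    LinearMap.finrank_range_of_inj (f := f.hom.hom.hom) (injective_of_mono f)] at this
  exact this ▸ Submodule.finrank_le _

-- A Maschke complement of the invariants has no invariant vectors.
lemma exists_simple_mono_of_invariants_ne_top [Finite G] [NeZero (Nat.card G : k)]
    (X : FDRep k G) (hX : invariants X.ρ ≠ ⊤) :
    ∃ (V : FDRep k G) (f : V ⟶ X), Simple V ∧ Mono f ∧ invariants V.ρ = ⊥ := by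
  let T : Subrepresentation X.ρ := ⟨invariants X.ρ, fun g v hv => (hv g).symm ▸ hv⟩
  obtain ⟨S, hS⟩ := exists_isCompl T
  have hS0 : S.toSubmodule ≠ ⊥ := by
    intro h
    apply hX
    have := hS.sup_eq_top
    rw [show S = ⊥ from Subrepresentation.toSubmodule_injective h, sup_bot_eq] at this
    exact congrArg Subrepresentation.toSubmodule this
  have : Nontrivial S.toSubmodule := Submodule.nontrivial_iff_ne_bot.2 hS0
  let ι : FDRep.of S.toRepresentation ⟶ X :=
    ⟨ConcreteCategory.ofHom S.toSubmodule.subtype, fun _ => rfl⟩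
  have := mono_of_injective ι S.toSubmodule.injective_subtype
  have hW : invariants (FDRep.of S.toRepresentation).ρ = ⊥ := by
    refine eq_bot_iff.2 fun w hw => ?_
    have hT : (w : X) ∈ T ⊓ S := ⟨fun g => congrArg Subtype.val (hw g), w.2⟩
    rw [hS.inf_eq_bot] at hT
    exact (Submodule.mem_bot k).2 (Subtype.ext hT)
  obtain ⟨V, e, hV, he⟩ := exists_simple_mono (FDRep.of S.toRepresentation)
  exact ⟨V, e ≫ ι, hV, mono_comp e ι, invariants_eq_bot_of_mono e hW⟩

end Invariants

section Characters

variable {k G : Type*} [Field k]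

lemma character_trivial [Monoid G] : (FDRep.of (Representation.trivial k G k)).character = 1 := by
  ext g
  simp [character]

lemma character_ne_one_of_invariants_eq_bot [CharZero k] [Group G] [Fintype G] (V : FDRep k G)
    (hV : invariants V.ρ = ⊥) : V.character ≠ 1 := by
  intro h
  have : Invertible (Nat.card G : k) := invertibleOfNonzero (by simp)
  have := average_char_eq_finrank_invariants V
  rw [hV, finrank_bot] at this
  simp [h] at this

universe u

variable {k G : Type u} [Field k] [IsAlgClosed k] [CharZero k] [Group G] [Fintype G]

instance simple_trivial : Simple (FDRep.of (Representation.trivial k G k)) := by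
  rw [simple_iff_char_is_norm_one, character_trivial]
  simp

lemma invariants_eq_bot_of_character_ne_one (V : FDRep k G) [Simple V] (hV : V.character ≠ 1) :
    invariants V.ρ = ⊥ := by
  have : Invertible (Nat.card G : k) := invertibleOfNonzero (by simp)
  have horth := char_orthonormal V (FDRep.of (Representation.trivial k G k))
  simp only [character_trivial, Pi.one_apply, mul_one, average_char_eq_finrank_invariants] at horth
  rw [if_neg fun ⟨e⟩ => hV ((char_iso e).trans character_trivial), Nat.cast_eq_zero] at horth
  exact Submodule.finrank_eq_zero.1 horth

end Characters

section PermRep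

universe u v

variable (k : Type u) [Field k] (G : Type v) [Group G] (X : Type u) [MulAction G X] [Finite X]

noncomputable abbrev permRep : FDRep k G := FDRep.of (Representation.ofMulAction k G X)

lemma finrank_permRep : finrank k (permRep k G X) = Nat.card X :=
  finrank_eq_nat_card_basis (MonoidAlgebra.basis X k)

variable {G} in
lemma character_permRep (g : G) : (permRep k G X).character g = Nat.card (fixedBy X g) := by
  classical
  have := Fintype.ofFinite X
  rw [FDRep.character, LinearMap.trace_eq_matrix_trace k (MonoidAlgebra.basis X k), Matrix.trace]
  simp [LinearMap.toMatrix_apply, MonoidAlgebra.basis, Finsupp.single_apply,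
    Nat.card_eq_fintype_card]

-- By Burnside's lemma the average number of fixed points is the number of orbits.
lemma finrank_invariants_permRep [Fintype G] [CharZero k] [IsPretransitive G X] [Nonempty X] :
    finrank k (invariants (permRep k G X).ρ) = 1 := by
  classical
  have := Fintype.ofFinite X
  have : Invertible (Nat.card G : k) := invertibleOfNonzero (by simp)
  obtain ⟨_⟩ := (pretransitive_iff_unique_quotient_of_nonempty G X).1 inferInstance
  have hburnside := sum_card_fixedBy_eq_card_orbits_mul_card_group G X
  rw [Fintype.card_unique, one_mul] at hburnside
  have := average_char_eq_finrank_invariants (permRep k G X)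
  simp only [character_permRep, Nat.card_eq_fintype_card] at this
  rw [← Nat.cast_sum, hburnside, inv_mul_cancel₀ (by simp)] at this
  exact_mod_cast this.symm

end PermRep

end FDRep

open FDRep

section PermChar

variable {G : Type} [Group G]

lemma Subgroup.card_conj_mem (M : Subgroup G) (g : G) :
    Nat.card {x : G // x * g * x⁻¹ ∈ M} = Nat.card M * Nat.card (fixedBy (G ⧸ M) g) := by
  rw [← Nat.card_prod, ← Nat.card_congr (QuotientGroup.preimageMkEquivSubgroupProdSet M _)]
  refine Nat.card_congr ((Equiv.inv G).subtypeEquiv fun x => ?_)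
  rw [Set.mem_preimage, mem_fixedBy, Equiv.inv_apply, eq_comm, MulAction.Quotient.smul_coe,
    smul_eq_mul, QuotientGroup.eq, inv_inv, mul_assoc]

variable [Finite G]

lemma permChar_apply (M : Subgroup G) (g : G) :
    permChar M g = Nat.card (fixedBy (G ⧸ M) g) := by
  have := Fintype.ofFinite G
  rw [permChar, indChar, finsum_eq_sum_of_fintype]
  simp only [dite_eq_ite]
  rw [Finset.sum_boole, ← Fintype.card_subtype, ← Nat.card_eq_fintype_card,
    Subgroup.card_conj_mem]
  push_cast
  rw [← mul_assoc, inv_mul_cancel₀ (by simp), one_mul]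

lemma charInner_permChar (M : Subgroup G) (V : FDRep ℂ G) :
    charInner G V.character (permChar M) = finrank ℂ (V ⟶ permRep ℂ G (G ⧸ M)) := by
  have := Fintype.ofFinite G
  rw [← scalar_product_char_eq_finrank_equivariant, charInner, finsum_eq_sum_of_fintype]
  congr 1
  refine Fintype.sum_equiv (Equiv.inv G) _ _ fun g => ?_
  rw [permChar_apply, map_natCast, character_permRep, Equiv.inv_apply, fixedBy_inv, mul_comm,
    inv_inv]

end PermChar

section LinearChar

variable {G : Type} [Group G]

lemma indChar_one [Finite G] {H : Subgroup G} {φ : H → ℂ} (hφ : φ 1 = 1) :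
    indChar H φ 1 = H.index := by
  have := Fintype.ofFinite G
  have hterm : ∀ x : G, (if h : x * 1 * x⁻¹ ∈ H then φ ⟨x * 1 * x⁻¹, h⟩ else 0) = 1 := fun x => by
    simp only [mul_one, mul_inv_cancel, H.one_mem, dif_pos]
    exact hφ
  rw [indChar, finsum_congr hterm, finsum_eq_sum_of_fintype, Finset.sum_const, Finset.card_univ,
    nsmul_eq_mul, mul_one, ← Nat.card_eq_fintype_card, ← H.card_mul_index]
  push_cast
  field_simp

def IsLinearChar.toHomUnits {H : Subgroup G} {φ : H → ℂ} (hφ : IsLinearChar H φ) : H →* ℂˣ :=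
  MonoidHom.toHomUnits ⟨⟨φ, hφ.1⟩, hφ.2⟩

lemma indChar_top [Finite G] {φ : (⊤ : Subgroup G) → ℂ} (hφ : IsLinearChar ⊤ φ) (g : G) :
    indChar ⊤ φ g = φ ⟨g, Subgroup.mem_top g⟩ := by
  have := Fintype.ofFinite G
  have hconj : ∀ x : G, φ ⟨x * g * x⁻¹, Subgroup.mem_top _⟩ = φ ⟨g, Subgroup.mem_top g⟩ := by
    intro x
    have key : hφ.toHomUnits (⟨x, Subgroup.mem_top x⟩ * ⟨g, Subgroup.mem_top g⟩ *
        ⟨x, Subgroup.mem_top x⟩⁻¹) = hφ.toHomUnits ⟨g, Subgroup.mem_top g⟩ := by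
      rw [map_mul, map_mul, map_inv, mul_inv_cancel_comm]
    exact congrArg Units.val key
  simp only [indChar, dif_pos (Subgroup.mem_top _), hconj]
  rw [Subgroup.card_top, finsum_eq_sum_of_fintype, Finset.sum_const, Finset.card_univ,
    nsmul_eq_mul, Nat.card_eq_fintype_card]
  field_simp

lemma MonoidHom.eq_one_of_isSimpleGroup {A : Type*} [IsSimpleGroup G] [CommGroup A]
    (hG : ¬ ∀ a b : G, a * b = b * a) (f : G →* A) : f = 1 := by
  rcases IsSimpleGroup.eq_bot_or_eq_top_of_normal f.ker f.normal_ker with h | h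
  · exact (hG fun a b => (f.ker_eq_bot_iff.1 h) (by rw [map_mul, map_mul, mul_comm])).elim
  · exact f.ker_eq_top_iff.1 h

lemma indChar_top_eq_one [Finite G] [IsSimpleGroup G] (hG : ¬ ∀ a b : G, a * b = b * a)
    {φ : (⊤ : Subgroup G) → ℂ} (hφ : IsLinearChar ⊤ φ) : indChar ⊤ φ = fun _ => 1 := by
  have h1 := MonoidHom.eq_one_of_isSimpleGroup hG
    (hφ.toHomUnits.comp Subgroup.topEquiv.symm.toMonoidHom)
  funext g
  rw [indChar_top hφ]
  exact congrArg Units.val (DFunLike.congr_fun h1 g)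

end LinearChar

lemma Subgroup.eq_top_of_index_lt {G : Type*} [Group G] [Finite G] {H M : Subgroup G}
    (hmax : ∀ K : Subgroup G, K ≠ ⊤ → Nat.card K ≤ Nat.card M) (h : H.index < M.index) :
    H = ⊤ := by
  by_contra hH
  have hcard : Nat.card H * H.index = Nat.card M * M.index :=
    H.card_mul_index.trans M.card_mul_index.symm
  have : Nat.card H * H.index < Nat.card M * M.index :=
    Nat.mul_lt_mul_of_le_of_lt (hmax H hH) h Nat.card_pos
  omega

section Constituents

variable {G : Type} [Group G] [Finite G]

lemma exists_constituent_permChar_ne_one {M : Subgroup G} (hM : M ≠ ⊤) :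
    ∃ χ : G → ℂ, IsConstituent G χ (permChar M) ∧ χ ≠ 1 := by
  have := Fintype.ofFinite G
  have hinv : invariants (permRep ℂ G (G ⧸ M)).ρ ≠ ⊤ := by
    intro h
    have := finrank_invariants_permRep ℂ G (G ⧸ M)
    rw [h, finrank_top, finrank_permRep, ← Subgroup.index_eq_card] at this
    exact (Subgroup.one_lt_index_of_ne_top hM).ne' this
  obtain ⟨V, f, hV, hf, hV0⟩ := exists_simple_mono_of_invariants_ne_top _ hinv
  refine ⟨V.character, ⟨⟨V, hV, rfl⟩, ?_⟩, character_ne_one_of_invariants_eq_bot V hV0⟩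
  have hf0 : f ≠ 0 := by
    rintro rfl
    exact Simple.not_isZero V (IsZero.of_mono_zero V (permRep ℂ G (G ⧸ M)))
  rw [charInner_permChar, Nat.cast_ne_zero]
  exact (finrank_pos_iff_exists_ne_zero.2 ⟨f, hf0⟩).ne'

lemma finrank_add_one_le_index (M : Subgroup G) (V : FDRep ℂ G) [Simple V]
    (hV : V.character ≠ 1) (hc : charInner G V.character (permChar M) ≠ 0) :
    finrank ℂ V + 1 ≤ M.index := by
  have := Fintype.ofFinite G
  rw [charInner_permChar, Nat.cast_ne_zero, ← Nat.pos_iff_ne_zero,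
    finrank_pos_iff_exists_ne_zero] at hc
  obtain ⟨f, hf⟩ := hc
  have := mono_of_nonzero_from_simple hf
  have := finrank_add_finrank_invariants_le f (invariants_eq_bot_of_character_ne_one V hV)
  rwa [finrank_invariants_permRep, finrank_permRep, ← Subgroup.index_eq_card] at this

end Constituents

/-- If `G` is a finite nonabelian simple group and `M` is a proper subgroup of maximal order
among proper subgroups, then `(1_M)^G` has a nonprincipal irreducible constituent, and no
nonprincipal irreducible constituent of `(1_M)^G` is monomial. -/
theorem stmt0 {G : Type} [Group G] [Finite G] [IsSimpleGroup G]
    (hna : ¬ ∀ a b : G, a * b = b * a)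
    (M : Subgroup G) (hM : M ≠ ⊤)
    (hmax : ∀ K : Subgroup G, K ≠ ⊤ → Nat.card K ≤ Nat.card M) :
    (∃ χ : G → ℂ, IsConstituent G χ (permChar M) ∧ χ ≠ fun _ => 1) ∧
    ∀ χ : G → ℂ, IsConstituent G χ (permChar M) → χ ≠ (fun _ => 1) → ¬ IsMonomial G χ := by
  refine ⟨exists_constituent_permChar_ne_one hM, ?_⟩
  rintro _ ⟨⟨V, hV, rfl⟩, hc⟩ hne ⟨H, φ, hφ, hχ⟩
  have hdeg := finrank_add_one_le_index M V hne hc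
  have hH : H.index = finrank ℂ V := by
    have := congrFun hχ 1
    rw [FDRep.char_one, indChar_one hφ.1] at this
    exact_mod_cast this.symm
  obtain rfl : H = ⊤ := Subgroup.eq_top_of_index_lt hmax (by omega)
  exact hne (hχ.trans (indChar_top_eq_one hna hφ))
end

section
/- Let G be a finite group with a normal π-complement H (a normal Hall π'-subgroup). Then for every maximal subgroup M of G with |G : M| a π-number and every irreducible constituent χ of (1_M)^G, H is contained in ker χ and χ(1) is a π-number. -/
open scoped BigOperators Classical

/-!
Because `|G : M|` is a `π`-number and `|H|` a `π'`-number, the index `|HM : M| = |H : H ∩ M|`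
divides both, so `H ≤ M`. By Frobenius reciprocity `⟨χ, (1_M)^G⟩ = ⟨χ_M, 1_M⟩`, so the simple
module `V` affording `χ` has a nonzero `M`-fixed vector. The `H`-fixed vectors form a nonzero
`G`-submodule since `H` is normal, hence all of `V`: `H` acts trivially and `V` is an irreducible
representation of `G/H`. Finally `χ(1) = dim V` divides `|G/H| = |G : H|`: by Schur's lemma
`∑ g, χ(g⁻¹) ρ(g)` is the scalar `|G| / dim V`, and this scalar is an algebraic integer, being an
eigenvalue of the matrix `(χ(g h⁻¹))` of algebraic integers.
-/

open CategoryTheory Module Polynomial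

theorem IsPiNumber.of_dvd {π : Set ℕ} {m n : ℕ} (hn : IsPiNumber π n) (hmn : m ∣ n) :
    IsPiNumber π m :=
  fun p hp hpm => hn p hp (hpm.trans hmn)

theorem IsPiNumber.eq_one_of_compl {π : Set ℕ} {n : ℕ} (h : IsPiNumber π n)
    (h' : IsPiNumber πᶜ n) : n = 1 := by
  by_contra hn
  obtain ⟨p, hp, hpn⟩ := Nat.exists_prime_and_dvd hn
  exact h' p hp hpn (h p hp hpn)

namespace Subgroup

variable {G : Type*} [Group G] [Finite G]

theorem relIndex_sup_of_normal (M N : Subgroup G) [N.Normal] :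
    M.relIndex (M ⊔ N) = M.relIndex N := by
  have h₁ := relIndex_inf_mul_relIndex M N (M ⊔ N)
  have h₂ := relIndex_inf_mul_relIndex N M (M ⊔ N)
  rw [inf_of_le_left le_sup_right, relIndex_sup_right] at h₁
  rw [inf_of_le_left le_sup_left, inf_comm, ← h₁, mul_comm] at h₂
  exact Nat.eq_of_mul_eq_mul_right (Nat.pos_of_ne_zero index_ne_zero_of_finite) h₂

theorem le_of_isPiNumber_compl_card_of_isPiNumber_index {π : Set ℕ} {N M : Subgroup G}
    [N.Normal] (hN : IsPiNumber πᶜ (Nat.card N)) (hM : IsPiNumber π M.index) : N ≤ M := by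
  have hsup : M.relIndex (M ⊔ N) = 1 := by
    refine IsPiNumber.eq_one_of_compl (hM.of_dvd (relIndex_dvd_index_of_le le_sup_left)) ?_
    rw [relIndex_sup_of_normal]
    exact hN.of_dvd (relIndex_dvd_card M N)
  exact le_sup_right.trans (relIndex_eq_one.mp hsup)

end Subgroup

theorem Nat.dvd_of_isIntegral_div {K : Type*} [Field K] [CharZero K] {a b : ℕ} (hb : b ≠ 0)
    (h : IsIntegral ℤ ((a : K) / b)) : b ∣ a := by
  obtain ⟨m, hm⟩ := (IsIntegral.exists_int_iff_exists_rat h).1 ⟨a / b, by push_cast; rfl⟩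
  have hab : (a : ℤ) = m * b := by
    exact_mod_cast (div_eq_iff (Nat.cast_ne_zero.2 hb : (b : K) ≠ 0)).1 hm
  exact Int.natCast_dvd_natCast.1 ⟨m, by rw [hab, mul_comm]⟩

theorem Matrix.isIntegral_of_isRoot_charpoly {R S n : Type*} [CommRing R] [CommRing S]
    [Algebra R S] [Fintype n] [DecidableEq n] {A : Matrix n n S} (hA : ∀ i j, IsIntegral R (A i j))
    {c : S} (hc : A.charpoly.IsRoot c) : IsIntegral R c := by
  let A₀ : Matrix n n (integralClosure R S) := fun i j => ⟨A i j, hA i j⟩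
  have hc₀ : IsIntegral (integralClosure R S) c := by
    refine ⟨A₀.charpoly, A₀.charpoly_monic, ?_⟩
    rw [eval₂_eq_eval_map, ← charpoly_map]
    exact hc
  exact isIntegral_trans c hc₀

theorem Module.End.pow_eq_one_of_hasEigenvalue {K V : Type*} [Field K] [AddCommGroup V]
    [Module K V] {f : End K V} {n : ℕ} (hf : f ^ n = 1) {μ : K} (hμ : f.HasEigenvalue μ) :
    μ ^ n = 1 := by
  obtain ⟨v, hv⟩ := (hμ.pow n).exists_hasEigenvector
  have hμv : μ ^ n • v = (1 : K) • v := by rw [← hv.apply_eq_smul, hf, one_smul]; rfl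
  exact smul_left_injective K hv.2 hμv

namespace Representation

section Irreducible

variable {k G K V : Type*} [Field k] [AddCommGroup V] [Module k V]

def subrepresentationCompOrderIso [Monoid G] [Monoid K] (ρ : Representation k K V) {f : G →* K}
    (hf : Function.Surjective f) : Subrepresentation ρ ≃o Subrepresentation (ρ.comp f) where
  toFun p := ⟨p.toSubmodule, fun g _ hv => p.apply_mem_toSubmodule (f g) hv⟩
  invFun q := ⟨q.toSubmodule, fun x _ hv => by
    obtain ⟨g, rfl⟩ := hf x
    exact q.apply_mem_toSubmodule g hv⟩
  left_inv _ := rfl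
  right_inv _ := rfl
  map_rel_iff' := Iff.rfl

theorem isIrreducible_comp_iff [Monoid G] [Monoid K] (ρ : Representation k K V) {f : G →* K}
    (hf : Function.Surjective f) : IsIrreducible (ρ.comp f) ↔ IsIrreducible ρ :=
  (subrepresentationCompOrderIso ρ hf).isSimpleOrder_iff.symm

theorem IsIrreducible.nontrivial [Monoid G] (ρ : Representation k G V) [IsIrreducible ρ] :
    Nontrivial V := by
  by_contra h
  rw [not_nontrivial_iff_subsingleton] at h
  exact bot_ne_top (α := Subrepresentation ρ)
    (Subrepresentation.toSubmodule_injective (Subsingleton.elim _ _))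

theorem IsIrreducible.eq_one_of_fixes_of_normal [Group G] (ρ : Representation k G V)
    [IsIrreducible ρ] {N : Subgroup G} [hN : N.Normal] {v : V} (hv : v ≠ 0)
    (hfix : ∀ n ∈ N, ρ n v = v) {n : G} (hn : n ∈ N) : ρ n = 1 := by
  let W : Subrepresentation ρ :=
    { toSubmodule := invariants (ρ.comp N.subtype)
      apply_mem_toSubmodule := fun g w hw m => by
        have hconj := hw ⟨g⁻¹ * m * g, hN.conj_mem' m m.2 g⟩
        calc ρ m (ρ g w) = ρ g (ρ (g⁻¹ * m * g) w) := by
              rw [← Module.End.mul_apply, ← map_mul, ← Module.End.mul_apply, ← map_mul]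
              group
          _ = ρ g w := congrArg (ρ g) hconj }
  have hvW : v ∈ W := fun m => hfix m m.2
  rcases IsSimpleOrder.eq_bot_or_eq_top W with hbot | htop
  · exact absurd ((Submodule.mem_bot k).mp (hbot ▸ hvW : v ∈ (⊥ : Subrepresentation ρ))) hv
  · ext w
    exact (htop ▸ (True.intro : w ∈ (⊤ : Subrepresentation ρ)) : w ∈ W) ⟨n, hn⟩

end Irreducible

section Integrality

variable {k G V : Type*} [Field k] [IsAlgClosed k] [Group G] [AddCommGroup V] [Module k V]
  [FiniteDimensional k V]

theorem isIntegral_character [Finite G] (ρ : Representation k G V) (g : G) :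
    IsIntegral ℤ (ρ.character g) := by
  rw [character, End.trace_eq_sum_roots_charpoly_of_splits (IsAlgClosed.splits _)]
  refine IsIntegral.multiset_sum fun μ hμ => ?_
  have hpow : ρ g ^ orderOf g = 1 := by rw [← map_pow, pow_orderOf_eq_one, map_one]
  have hμ1 : μ ^ orderOf g = 1 := End.pow_eq_one_of_hasEigenvalue hpow
    ((End.hasEigenvalue_iff_isRoot_charpoly _ _).2 (isRoot_of_mem_roots hμ))
  have hμfin : IsOfFinOrder μ := isOfFinOrder_iff_pow_eq_one.2 ⟨_, orderOf_pos g, hμ1⟩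
  exact (IsPrimitiveRoot.orderOf μ).isIntegral hμfin.orderOf_pos

variable [CharZero k] [Fintype G]

theorem sum_character_inv_smul_eq (ρ : Representation k G V) [IsIrreducible ρ] :
    ∑ g, ρ.character g⁻¹ • ρ g = ((Nat.card G : k) / finrank k V) • 1 := by
  have hG : (Nat.card G : k) ≠ 0 := Nat.cast_ne_zero.2 Nat.card_pos.ne'
  have := invertibleOfNonzero hG
  have := IsIrreducible.nontrivial ρ
  set T := ∑ g, ρ.character g⁻¹ • ρ g
  have hT : ∀ h, T * ρ h = ρ h * T := by
    intro h
    simp only [T, Finset.sum_mul, Finset.mul_sum, smul_mul_assoc, mul_smul_comm]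
    refine Fintype.sum_equiv (MulAut.conj h⁻¹).toEquiv _ _ fun g => ?_
    simp only [MulEquiv.toEquiv_eq_coe, MulEquiv.coe_toEquiv, MulAut.conj_apply, inv_inv, ← map_mul]
    rw [mul_inv_rev, mul_inv_rev, inv_inv, char_mul_comm]
    group
  obtain ⟨c, hc⟩ := IsIrreducible.algebraMap_intertwiningMap_bijective_of_isAlgClosed.2
    (T.intertwiningMap_of_isIntertwiningMap ρ ρ fun h v => LinearMap.congr_fun (hT h) v)
  have hTc : T = c • 1 := (congrArg IntertwiningMap.toLinearMap hc).symm
  have htrace : c * finrank k V = Nat.card G := by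
    have horth := char_orthonormal ρ ρ
    rw [if_pos ⟨Equiv.refl ρ⟩, inv_mul_eq_one₀ hG] at horth
    have := congrArg (LinearMap.trace k V) hTc
    simp only [T, map_sum, map_smul, smul_eq_mul, LinearMap.trace_one] at this
    rw [horth, ← this]
    simp [character, mul_comm]
  rw [hTc]
  congr 1
  rw [eq_div_iff (Nat.cast_ne_zero.2 finrank_pos.ne'), htrace]

open Matrix in
theorem isIntegral_card_div_finrank (ρ : Representation k G V) [IsIrreducible ρ] :
    IsIntegral ℤ ((Nat.card G : k) / finrank k V) := by
  set c := (Nat.card G : k) / finrank k V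
  have := IsIrreducible.nontrivial ρ
  obtain ⟨v, hv⟩ := exists_ne (0 : V)
  let φ := Fintype.linearCombination k fun g => ρ g v
  let B : Matrix G G k := of fun h g => ρ.character (g * h⁻¹)
  have hφB : ∀ f, φ (B *ᵥ f) = (∑ g, ρ.character g⁻¹ • ρ g) (φ f) := by
    intro f
    simp only [φ, B, Fintype.linearCombination_apply, LinearMap.sum_apply, LinearMap.smul_apply,
      map_sum, map_smul, mulVec, dotProduct, of_apply, Finset.sum_smul,
      ← Module.End.mul_apply, ← map_mul]
    rw [Finset.sum_comm]
    refine Finset.sum_congr rfl fun g _ => ?_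
    rw [Finset.smul_sum]
    refine (Fintype.sum_equiv (Equiv.mulRight g) _ _ fun x => ?_).symm
    simp [smul_smul, mul_comm]
  have hroot : B.charpoly.IsRoot c := by
    rw [IsRoot, eval_charpoly]
    by_contra hdet
    obtain ⟨f, hf⟩ := mulVec_surjective_iff_isUnit.2 ((isUnit_iff_isUnit_det _).2 (Ne.isUnit hdet))
      (Pi.single 1 1)
    apply hv
    calc v = φ (Pi.single 1 1) := by simp [φ]
      _ = φ ((scalar G c - B) *ᵥ f) := by rw [hf]
      _ = 0 := by
        have hcf : scalar G c *ᵥ f = c • f := by ext; simp [mulVec_diagonal]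
        rw [sub_mulVec, map_sub, hφB, sum_character_inv_smul_eq, hcf, map_smul, sub_eq_zero]
        rfl
  exact isIntegral_of_isRoot_charpoly (fun _ _ => isIntegral_character ρ _) hroot

theorem finrank_dvd_card (ρ : Representation k G V) [IsIrreducible ρ] :
    finrank k V ∣ Nat.card G :=
  have := IsIrreducible.nontrivial ρ
  Nat.dvd_of_isIntegral_div finrank_pos.ne' (isIntegral_card_div_finrank ρ)

end Integrality

end Representation

theorem FDRep.isIrreducible_ρ_of_simple {k G : Type*} [Field k] [Monoid G] (V : FDRep k G)
    [Simple V] : Representation.IsIrreducible V.ρ := by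
  have : Nontrivial V := by
    by_contra h
    rw [not_nontrivial_iff_subsingleton] at h
    exact id_nonzero V (by ext; exact Subsingleton.elim _ _)
  have : Nontrivial (Subrepresentation V.ρ) :=
    ⟨⊥, ⊤, fun h => bot_ne_top (congrArg Subrepresentation.toSubmodule h)⟩
  refine ⟨fun p => ?_⟩
  let ι : FDRep.of p.toRepresentation ⟶ V :=
    ⟨FGModuleCat.ofHom p.toSubmodule.subtype, fun g => rfl⟩
  have : Mono ι := ConcreteCategory.mono_of_injective ι Subtype.val_injective
  by_cases hι : ι = 0
  · left
    ext x
    refine ⟨fun hx => ?_, fun hx => (Submodule.mem_bot k).mp hx ▸ p.toSubmodule.zero_mem⟩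
    exact congrArg (fun f : FDRep.of p.toRepresentation ⟶ V => f.hom.hom.hom ⟨x, hx⟩) hι
  · right
    have : IsIso ι := isIso_of_mono_of_nonzero hι
    ext x
    obtain ⟨y, rfl⟩ := (ConcreteCategory.bijective_of_isIso ι).2 x
    exact ⟨fun _ => trivial, fun _ => y.2⟩

section PermChar

variable {G : Type} [Group G] [Fintype G]

theorem permChar_apply_s6 (M : Subgroup G) (g : G) :
    permChar M g = (Nat.card M : ℂ)⁻¹ * ∑ x : G, if x * g * x⁻¹ ∈ M then 1 else 0 := by
  simp [permChar, indChar, finsum_eq_sum_of_fintype]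

theorem charInner_permChar_s6 (M : Subgroup G) {χ : G → ℂ} (hχ : ∀ g x, χ (x * g * x⁻¹) = χ g) :
    charInner G χ (permChar M) = (Nat.card M : ℂ)⁻¹ * ∑ m : M, χ m := by
  have hconj : ∀ x : G, ∑ g, (if x * g * x⁻¹ ∈ M then χ g else 0) = ∑ m : M, χ m := by
    intro x
    rw [← Finset.sum_subtype (Finset.univ.filter (· ∈ M)) (by simp) χ, Finset.sum_filter]
    exact Fintype.sum_equiv (MulAut.conj x).toEquiv _ _ fun g => by simp [hχ]
  have hreal : ∀ g, starRingEnd ℂ (permChar M g) = permChar M g := fun g => by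
    simp [permChar_apply_s6]
  calc charInner G χ (permChar M)
      = (Nat.card G : ℂ)⁻¹ * ((Nat.card M : ℂ)⁻¹ *
          ∑ x : G, ∑ g, if x * g * x⁻¹ ∈ M then χ g else 0) := by
        simp only [charInner, finsum_eq_sum_of_fintype, hreal]
        simp only [permChar_apply_s6, Finset.mul_sum, mul_ite, mul_one, mul_zero]
        rw [Finset.sum_comm]
        refine Finset.sum_congr rfl fun _ _ => Finset.sum_congr rfl fun _ _ => ?_
        split_ifs <;> ring
    _ = (Nat.card M : ℂ)⁻¹ * ∑ m : M, χ m := by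
        simp only [hconj, Finset.sum_const, Finset.card_univ, nsmul_eq_mul,
          ← Nat.card_eq_fintype_card]
        field_simp

theorem FDRep.exists_ne_zero_fixed_of_charInner_permChar_ne_zero (V : FDRep ℂ G)
    {M : Subgroup G} (h : charInner G V.character (permChar M) ≠ 0) :
    ∃ v : V, v ≠ 0 ∧ ∀ m ∈ M, V.ρ m v = v := by
  have := invertibleOfNonzero (Nat.cast_ne_zero.2 Nat.card_pos.ne' : (Nat.card M : ℂ) ≠ 0)
  have hfix := Representation.card_inv_mul_sum_char_eq_finrank (V.ρ.comp M.subtype)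
  rw [charInner_permChar_s6 M V.char_conj,
    show (Nat.card M : ℂ)⁻¹ * ∑ m : M, V.character m = _ from hfix, Nat.cast_ne_zero,
    Ne, Submodule.finrank_eq_zero] at h
  obtain ⟨v, hv, hv0⟩ := Submodule.exists_mem_ne_zero_of_ne_bot h
  exact ⟨v, hv0, fun m hm => hv ⟨m, hm⟩⟩

end PermChar

theorem stmt6_general {G : Type} [Group G] [Finite G] (π : Set ℕ)
    (H : Subgroup G) (hn : H.Normal)
    (hcard : IsPiNumber πᶜ (Nat.card H)) (hidx : IsPiNumber π H.index)
    (M : Subgroup G) (hMidx : IsPiNumber π M.index)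
    (χ : G → ℂ) (hχ : IsConstituent G χ (permChar M)) :
    (H : Set G) ⊆ charKer G χ ∧ ∃ d : ℕ, χ 1 = (d : ℂ) ∧ IsPiNumber π d := by
  have := Fintype.ofFinite G
  obtain ⟨⟨V, hV, rfl⟩, hinner⟩ := hχ
  have hHM : H ≤ M := Subgroup.le_of_isPiNumber_compl_card_of_isPiNumber_index hcard hMidx
  obtain ⟨v, hv, hvM⟩ := V.exists_ne_zero_fixed_of_charInner_permChar_ne_zero hinner
  have hirr := V.isIrreducible_ρ_of_simple
  have htriv : ∀ h ∈ H, V.ρ h = 1 := fun h hh =>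
    Representation.IsIrreducible.eq_one_of_fixes_of_normal V.ρ hv (fun n hn => hvM n (hHM hn)) hh
  refine ⟨fun h hh => ?_, finrank ℂ V, V.char_one, ?_⟩
  · simp [charKer, FDRep.character, htriv h hh]
  · let ρH : Representation ℂ (G ⧸ H) V := QuotientGroup.lift H V.ρ htriv
    have : ρH.IsIrreducible := (ρH.isIrreducible_comp_iff (QuotientGroup.mk'_surjective H)).1 hirr
    have := Fintype.ofFinite (G ⧸ H)
    exact hidx.of_dvd ρH.finrank_dvd_card

/-- If `G` has a normal `π`-complement `H`, then for every maximal subgroup `M` of `π`-number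
index and every irreducible constituent `χ` of `(1_M)^G`, `H ≤ ker χ` and `χ(1)` is a
`π`-number. -/
theorem stmt6 {G : Type} [Group G] [Finite G] (π : Set ℕ)
    (H : Subgroup G) (hn : H.Normal)
    (hcard : IsPiNumber πᶜ (Nat.card H)) (hidx : IsPiNumber π H.index)
    (M : Subgroup G) (hM : IsCoatom M) (hMidx : IsPiNumber π M.index)
    (χ : G → ℂ) (hχ : IsConstituent G χ (permChar M)) :
    (H : Set G) ⊆ charKer G χ ∧ ∃ d : ℕ, χ 1 = (d : ℂ) ∧ IsPiNumber π d :=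
  stmt6_general π H hn hcard hidx M hMidx χ hχ
end

section
/- Let N be a normal p-subgroup of a finite group G with p ∈ π, let K be a Hall π'-subgroup of NK ⊴ G, and suppose some λ ∈ Irr(N) that is G-invariant on NK extends to NK. If N is abelian and λ extends to NK, then NK has a normal Hall π'-subgroup (normal π-complement in NK). -/
open scoped BigOperators Classical

/-!
Since `N` is abelian, `λ` is a nonzero multiple of a linear character, so faithfulness makes `λ`
injective and its `H`-invariance forces `N ≤ Z(H)`. The `π`-elements of the central subgroup `N`
form a normal `π`-subgroup `P` of `H` whose index is a `π'`-number (as `|H : N|` is), so by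
Schur–Zassenhaus `P` has a complement `K`, and `K` is normal because `H = PK` with `P` central.
-/

open CategoryTheory Module

namespace FDRep

variable {k G : Type*} [Field k] [Monoid G]

lemma nontrivial_of_simple (V : FDRep k G) [Simple V] : Nontrivial V := by
  by_contra h
  rw [not_nontrivial_iff_subsingleton] at h
  exact id_nonzero V (Action.hom_ext _ _ (by ext; exact Subsingleton.elim _ _))

lemma exists_algebraMap_eq_ρ_of_commute [IsAlgClosed k] (hcomm : ∀ a b : G, a * b = b * a)
    (V : FDRep k G) [Simple V] (g : G) : ∃ c : k, algebraMap k (End k V) c = V.ρ g := by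
  let f : V ⟶ V := ⟨FGModuleCat.ofHom (V.ρ g), fun h => by
    ext v
    change V.ρ g (V.ρ h v) = V.ρ h (V.ρ g v)
    rw [← Module.End.mul_apply, ← Module.End.mul_apply, ← map_mul, ← map_mul, hcomm]⟩
  obtain ⟨c, hc⟩ := endomorphism_simple_eq_smul_id k f
  exact ⟨c, by rw [algebraMap_end_eq_smul_id]; exact congrArg (fun φ : V ⟶ V => φ.hom.hom.hom) hc⟩

end FDRep

theorem IsIrrChar.exists_monoidHom_of_commute {G : Type} [Group G]
    (hcomm : ∀ a b : G, a * b = b * a) {χ : G → ℂ} (hχ : IsIrrChar G χ) :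
    ∃ c : G →* ℂ, χ 1 ≠ 0 ∧ ∀ g, χ g = c g * χ 1 := by
  obtain ⟨V, hV, rfl⟩ := hχ
  have := V.nontrivial_of_simple
  choose c hc using V.exists_algebraMap_eq_ρ_of_commute hcomm
  have hinj := (algebraMap ℂ (End ℂ V)).injective
  let c' : G →* ℂ :=
    { toFun := c
      map_one' := hinj (by rw [hc, map_one, map_one])
      map_mul' := fun a b => hinj (by rw [hc, map_mul, map_mul, hc, hc]) }
  refine ⟨c', by simp [finrank_pos.ne'], fun g => ?_⟩
  rw [FDRep.char_one, FDRep.character, ← hc, Algebra.algebraMap_eq_smul_one, map_smul,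
    LinearMap.trace_one, smul_eq_mul]
  rfl

theorem IsIrrChar.injective_of_commute {G : Type} [Group G]
    (hcomm : ∀ a b : G, a * b = b * a) {χ : G → ℂ} (hχ : IsIrrChar G χ)
    (hfaith : ∀ g, χ g = χ 1 → g = 1) : Function.Injective χ := by
  obtain ⟨c, hχ1, hχc⟩ := hχ.exists_monoidHom_of_commute hcomm
  intro a b hab
  rw [hχc a, hχc b, mul_left_inj' hχ1] at hab
  refine mul_inv_eq_one.mp (hfaith _ ?_)
  rw [hχc, map_mul, hab, ← map_mul, mul_inv_cancel, map_one, one_mul]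

theorem Subgroup.le_center_of_conjChar_eq {G : Type} [Group G] {N : Subgroup G} (hN : N.Normal)
    {lam : N → ℂ} (hinj : Function.Injective lam) (hinv : ∀ g, conjChar hN g lam = lam) :
    N ≤ center G := fun n hn => mem_center_iff.mpr fun g =>
  mul_inv_eq_iff_eq_mul.mp (congrArg Subtype.val (hinj (congrFun (hinv g) ⟨n, hn⟩)))

namespace IsPiNumber

variable {π : Set ℕ} {m n : ℕ}

lemma of_dvd_s18 (hn : IsPiNumber π n) (hmn : m ∣ n) : IsPiNumber π m :=
  fun p hp hpm => hn p hp (hpm.trans hmn)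

lemma mul (hm : IsPiNumber π m) (hn : IsPiNumber π n) : IsPiNumber π (m * n) :=
  fun p hp hpmn => (hp.dvd_mul.mp hpmn).elim (hm p hp) (hn p hp)

lemma coprime (hm : IsPiNumber π m) (hn : IsPiNumber πᶜ n) : m.Coprime n :=
  Nat.coprime_of_dvd fun p hp hpm hpn => hn p hp hpn (hm p hp hpm)

end IsPiNumber

namespace Subgroup

variable {G : Type*} [Group G]

lemma normal_of_le_center {P : Subgroup G} (hP : P ≤ center G) : P.Normal :=
  ⟨fun n hn g => by rwa [mem_center_iff.mp (hP hn) g, mul_inv_cancel_right]⟩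

lemma IsComplement'.normal_of_le_center {P K : Subgroup G} (h : IsComplement' P K)
    (hP : P ≤ center G) : K.Normal := by
  rw [← normalizer_eq_top_iff, eq_top_iff, ← h.sup_eq_top]
  exact sup_le (hP.trans (center_le_normalizer _)) le_normalizer

def centralPiPart (π : Set ℕ) (Z : Subgroup G) (hZ : Z ≤ center G) : Subgroup G where
  carrier := {g | g ∈ Z ∧ IsPiNumber π (orderOf g)}
  one_mem' := ⟨Z.one_mem, fun p hp hp1 => (hp.ne_one (by simpa using hp1)).elim⟩
  mul_mem' := fun {a b} ⟨ha, haπ⟩ ⟨hb, hbπ⟩ =>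
    ⟨Z.mul_mem ha hb, (haπ.mul hbπ).of_dvd_s18 <|
      (Commute.orderOf_mul_dvd_lcm (mem_center_iff.mp (hZ hb) a)).trans (Nat.lcm_dvd_mul _ _)⟩
  inv_mem' := fun {a} ⟨ha, haπ⟩ => ⟨Z.inv_mem ha, by rwa [orderOf_inv]⟩

variable {π : Set ℕ} {Z : Subgroup G} {hZ : Z ≤ center G}

lemma centralPiPart_le : centralPiPart π Z hZ ≤ Z := fun _ hg => hg.1

lemma isPiNumber_card_centralPiPart [Finite G] :
    IsPiNumber π (Nat.card (centralPiPart π Z hZ)) := by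
  intro p hp hpd
  have := Fact.mk hp
  obtain ⟨x, hx⟩ := exists_prime_orderOf_dvd_card' p hpd
  exact x.2.2 p hp (by rw [orderOf_coe, hx])

lemma isPiNumber_compl_relIndex_centralPiPart [Finite G] :
    IsPiNumber πᶜ ((centralPiPart π Z hZ).relIndex Z) := by
  intro p hp hpd hpπ
  have := Fact.mk hp
  let S : Sylow p Z := default
  have hSP : (S : Subgroup Z) ≤ (centralPiPart π Z hZ).subgroupOf Z := by
    intro x hx
    obtain ⟨k, hk⟩ := IsPGroup.iff_orderOf.mp S.2 ⟨x, hx⟩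
    refine ⟨x.2, fun q hq hqd => ?_⟩
    rw [orderOf_mk, ← orderOf_coe] at hk
    rw [coe_subtype, hk] at hqd
    rwa [(Nat.prime_dvd_prime_iff_eq hq hp).mp (hq.dvd_of_dvd_pow hqd)]
  exact S.not_dvd_index (hpd.trans (index_dvd_of_le hSP))

end Subgroup

open Subgroup in
theorem exists_normal_hall_of_le_center {G : Type*} [Group G] [Finite G] {π : Set ℕ}
    {Z : Subgroup G} (hZ : Z ≤ center G) (hindex : IsPiNumber πᶜ Z.index) :
    ∃ K : Subgroup G, K.Normal ∧ IsPiNumber πᶜ (Nat.card K) ∧ IsPiNumber π K.index := by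
  set P := centralPiPart π Z hZ
  have hPcenter : P ≤ center G := centralPiPart_le.trans hZ
  have hPcard : IsPiNumber π (Nat.card P) := isPiNumber_card_centralPiPart
  have hPindex : IsPiNumber πᶜ P.index := by
    rw [← relIndex_mul_index centralPiPart_le]
    exact isPiNumber_compl_relIndex_centralPiPart.mul hindex
  have := normal_of_le_center hPcenter
  obtain ⟨K, hK⟩ := exists_right_complement'_of_coprime (hPcard.coprime hPindex)
  exact ⟨K, hK.normal_of_le_center hPcenter, hK.symm.index_eq_card ▸ hPindex,
    hK.index_eq_card ▸ hPcard⟩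

theorem stmt18_general {H : Type} [Group H] [Finite H] (π : Set ℕ)
    (N : Subgroup H) (hN : N.Normal) (hab : ∀ a b : N, a * b = b * a)
    (hquot : IsPiNumber πᶜ N.index)
    (lam : N → ℂ) (hirr : IsIrrChar N lam)
    (hfaith : ∀ n : N, lam n = lam 1 → n = 1)
    (hinv : ∀ h : H, conjChar hN h lam = lam) :
    ∃ K : Subgroup H, K.Normal ∧ IsPiNumber πᶜ (Nat.card K) ∧ IsPiNumber π K.index :=
  exists_normal_hall_of_le_center
    (N.le_center_of_conjChar_eq hN (hirr.injective_of_commute hab hfaith) hinv) hquot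

/-- If `N ⊴ H` is abelian with `H/N` a `π'`-group and some faithful irreducible character of
`N` that is invariant in `H` extends to `H`, then `H` has a normal Hall `π'`-subgroup (a
normal `π`-complement). -/
theorem stmt18 {H : Type} [Group H] [Finite H] (π : Set ℕ)
    (N : Subgroup H) (hN : N.Normal) (hab : ∀ a b : N, a * b = b * a)
    (hquot : IsPiNumber πᶜ N.index)
    (lam : N → ℂ) (hirr : IsIrrChar N lam)
    (hfaith : ∀ n : N, lam n = lam 1 → n = 1)
    (hinv : ∀ h : H, conjChar hN h lam = lam)
    (hext : ∃ μ : H → ℂ, IsIrrChar H μ ∧ ∀ n : N, μ (n : H) = lam n) :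
    ∃ K : Subgroup H, K.Normal ∧ IsPiNumber πᶜ (Nat.card K) ∧ IsPiNumber π K.index :=
  stmt18_general π N hN hab hquot lam hirr hfaith hinv
end
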